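/- For a finite bipartite simple graph G on n vertices, the Estrada–Rodríguez-Velázquez bipartivity index β(G) = (Σⱼ cosh λⱼ)/(Σⱼ e^{λⱼ}) equals 1, where λ₁,…,λₙ are the adjacency eigenvalues; equivalently Tr(cosh A) = Tr(e^{A}). -/

import Mathlib

/-!
Signing the two colour classes of `G` by `±1` gives a diagonal involution `D` with
`D A D = -A`. Hence `e^{-A}` is conjugate to `e^A`, the two have the same trace, and
`Tr(cosh A) = Tr(e^A)`.
-/

open Matrix

theorem Matrix.trace_exp_neg_of_involutive_conj {m 𝔸 : Type*} [Fintype m] [DecidableEq m]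
    [NormedCommRing 𝔸] [NormedAlgebra ℚ 𝔸] [CompleteSpace 𝔸] {D A : Matrix m m 𝔸}
    (hD : D * D = 1) (hDA : D * A * D = -A) :
    (NormedSpace.exp (-A)).trace = (NormedSpace.exp A).trace := by
  rw [← hDA]
  exact (congrArg trace (exp_units_conj ⟨D, D, hD, hD⟩ A)).trans (trace_units_conj _ _)

namespace SimpleGraph

variable {V R : Type*} {G : SimpleGraph V} [CommRing R]

theorem diagonal_mul_adjMatrix_mul_diagonal_eq_neg [Fintype V] [DecidableEq V]
    [DecidableRel G.Adj] {s : V → R} (hs : ∀ ⦃i j⦄, G.Adj i j → s i * s j = -1) :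
    diagonal s * G.adjMatrix R * diagonal s = -G.adjMatrix R := by
  ext i j
  rw [mul_diagonal, diagonal_mul, neg_apply, adjMatrix_apply]
  split_ifs with h
  · rw [mul_one, hs h]
  · rw [mul_zero, zero_mul, neg_zero]

namespace Coloring

def sign (c : G.Coloring (Fin 2)) (v : V) : R := if c v = 0 then 1 else -1

theorem sign_mul_self (c : G.Coloring (Fin 2)) (v : V) : c.sign v * c.sign v = (1 : R) := by
  unfold sign; split_ifs <;> simp

theorem sign_mul_sign_of_adj (c : G.Coloring (Fin 2)) ⦃i j : V⦄ (h : G.Adj i j) :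
    c.sign i * c.sign j = (-1 : R) := by
  have hne := c.valid h
  unfold sign
  generalize c i = a at hne
  generalize c j = b at hne
  fin_cases a <;> fin_cases b <;> simp_all

theorem diagonal_sign_mul_self [Fintype V] [DecidableEq V] (c : G.Coloring (Fin 2)) :
    diagonal c.sign * diagonal c.sign = (1 : Matrix V V R) := by
  rw [diagonal_mul_diagonal, ← diagonal_one]
  exact congrArg diagonal (funext c.sign_mul_self)

end Coloring

end SimpleGraph

/-- For a finite bipartite simple graph the Estrada–Rodríguez-Velázquez
bipartivity index `β(G) = Tr(cosh A) / Tr(e^A)` equals `1`; equivalently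
`Tr(cosh A) = Tr(e^A)`, where `cosh A = (e^A + e^{-A})/2`. -/
theorem estrada_rodriguez_velazquez_bipartivity {V : Type*} [Fintype V] [DecidableEq V]
    (G : SimpleGraph V) [DecidableRel G.Adj] (hbip : G.Colorable 2) :
    ((NormedSpace.exp (G.adjMatrix ℝ)).trace +
        (NormedSpace.exp (-(G.adjMatrix ℝ))).trace) / 2 =
      (NormedSpace.exp (G.adjMatrix ℝ)).trace := by
  obtain ⟨c⟩ := hbip
  rw [trace_exp_neg_of_involutive_conj (c.diagonal_sign_mul_self (R := ℝ))
    (G.diagonal_mul_adjMatrix_mul_diagonal_eq_neg c.sign_mul_sign_of_adj)]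
  ring
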